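/- arXiv:2502.06464 — 4 statements merged into one kernel-verified Lean document; each statement's English description precedes it below -/
import Mathlib

section
/- Let x, y ∈ {0,1}^{n×n} and let R(x,y) be the SR instance on 4n agents A ∪ B ∪ C ∪ D defined as follows: a_i prefers (in order) all b_j with x_{ij}=1, then c_i, then all others; b_j prefers all c_i with y_{ij}=1, then all a_i with y_{ij}=1, then d_j, then all others; c_i prefers a_i, then all agents of B, then all others; d_j prefers b_j, then all others. If x and y are disjoint (x_{ij} y_{ij} = 0 for all i, j), then the matching M = {{a_i, c_i} : i ∈ [n]} ∪ {{b_j, d_j} : j ∈ [n]} is stable. -/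
/-!
Each `cᵢ` and `dⱼ` is matched to its unique first choice, so neither can block. Agent `aᵢ` ranks
its partner `cᵢ` below only the `bⱼ` with `x i j`, and `bⱼ` ranks its partner `dⱼ` below only the
`aᵢ`, `cᵢ` with `y i j`. A blocking pair would therefore be some `{aᵢ, bⱼ}` with
`x i j = y i j = true`, which disjointness excludes.
-/

/-- A perfect matching on the agent set: an involution with no fixed points. -/
def IsMatching {S : Type*} (M : S → S) : Prop :=
  (∀ x, M (M x) = x) ∧ ∀ x, M x ≠ x

/-- `{u, v}` is a blocking pair for the matching `M` (lower rank = more preferred). -/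
def Blocks {S : Type*} (rank : S → S → ℕ) (M : S → S) (u v : S) : Prop :=
  u ≠ v ∧ M u ≠ v ∧ rank u v < rank u (M u) ∧ rank v u < rank v (M v)

/-- A stable matching: a perfect matching with no blocking pair. -/
def IsStable {S : Type*} (rank : S → S → ℕ) (M : S → S) : Prop :=
  IsMatching M ∧ ∀ u v, ¬ Blocks rank M u v

/-- Preference tiers of the instance `R(x,y)`: agent `(0,i)` is `aᵢ`, `(1,j)` is `bⱼ`,
`(2,i)` is `cᵢ`, `(3,j)` is `dⱼ`.  Lower tier = more preferred. -/
def Rtier {n : ℕ} (x y : Fin n → Fin n → Bool) (u v : Fin 4 × Fin n) : ℕ :=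
  if u.1 = 0 then
    (if v.1 = 1 ∧ x u.2 v.2 = true then 0
     else if v.1 = 2 ∧ v.2 = u.2 then 1 else 2)
  else if u.1 = 1 then
    (if v.1 = 2 ∧ y v.2 u.2 = true then 0
     else if v.1 = 0 ∧ y v.2 u.2 = true then 1
     else if v.1 = 3 ∧ v.2 = u.2 then 2 else 3)
  else if u.1 = 2 then
    (if v.1 = 0 ∧ v.2 = u.2 then 0 else if v.1 = 1 then 1 else 2)
  else
    (if v.1 = 1 ∧ v.2 = u.2 then 0 else 1)

/-- `rank` is a strict preference ranking consistent with the tier structure of `R(x,y)`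
(ties inside a tier are broken arbitrarily). -/
def IsRPref {n : ℕ} (x y : Fin n → Fin n → Bool)
    (rank : Fin 4 × Fin n → Fin 4 × Fin n → ℕ) : Prop :=
  (∀ u v w, v ≠ u → w ≠ u → Rtier x y u v < Rtier x y u w → rank u v < rank u w) ∧
  (∀ u v w, v ≠ u → w ≠ u → rank u v = rank u w → v = w)

/-- The matching `M₀ = {{aᵢ, cᵢ}} ∪ {{bⱼ, dⱼ}}`. -/
def M0 {n : ℕ} : Fin 4 × Fin n → Fin 4 × Fin n := fun u =>
  if u.1 = 0 then ((2 : Fin 4), u.2) else if u.1 = 1 then ((3 : Fin 4), u.2)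
  else if u.1 = 2 then ((0 : Fin 4), u.2) else ((1 : Fin 4), u.2)

section

variable {n : ℕ}

lemma M0_M0 (u : Fin 4 × Fin n) : M0 (M0 u) = u := by
  obtain ⟨t, i⟩ := u
  fin_cases t <;> simp [M0]

lemma M0_ne_self (u : Fin 4 × Fin n) : M0 u ≠ u := by
  obtain ⟨t, i⟩ := u
  fin_cases t <;> simp [M0, Prod.ext_iff]

lemma isMatching_M0 : IsMatching (M0 (n := n)) :=
  ⟨M0_M0, M0_ne_self⟩

variable (x y : Fin n → Fin n → Bool)

def Tempts (u v : Fin 4 × Fin n) : Prop :=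
  (u.1 = 0 ∧ v.1 = 1 ∧ x u.2 v.2 = true) ∨ (u.1 = 1 ∧ (v.1 = 0 ∨ v.1 = 2) ∧ y v.2 u.2 = true)

lemma tempts_of_Rtier_le_M0 {u v : Fin 4 × Fin n} (hv : M0 u ≠ v)
    (h : Rtier x y u v ≤ Rtier x y u (M0 u)) : Tempts x y u v := by
  obtain ⟨t, i⟩ := u
  obtain ⟨s, j⟩ := v
  fin_cases t <;> fin_cases s <;> simp_all [Tempts, Rtier, M0] <;> split_ifs at h <;> simp_all

variable {x y}

lemma not_tempts_and_tempts (hdisj : ∀ i j, ¬ (x i j = true ∧ y i j = true))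
    (u v : Fin 4 × Fin n) : ¬ (Tempts x y u v ∧ Tempts x y v u) := by
  rintro ⟨huv | huv, hvu | hvu⟩ <;> grind

lemma Rtier_le_of_rank_lt {rank : Fin 4 × Fin n → Fin 4 × Fin n → ℕ} (hpref : IsRPref x y rank)
    {u v w : Fin 4 × Fin n} (hv : v ≠ u) (hw : w ≠ u) (h : rank u v < rank u w) :
    Rtier x y u v ≤ Rtier x y u w :=
  not_lt.1 fun h' => (hpref.1 u w v hw hv h').asymm h

end

/-- If `x` and `y` are disjoint then `M₀` is a stable matching of `R(x,y)`. -/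
theorem stmt3 {n : ℕ} (x y : Fin n → Fin n → Bool)
    (rank : Fin 4 × Fin n → Fin 4 × Fin n → ℕ) (hpref : IsRPref x y rank)
    (hdisj : ∀ i j, ¬ (x i j = true ∧ y i j = true)) :
    IsStable rank (M0 (n := n)) := by
  refine ⟨isMatching_M0, fun u v ⟨huv, hMuv, hu, hv⟩ => not_tempts_and_tempts hdisj u v ⟨?_, ?_⟩⟩
  · exact tempts_of_Rtier_le_M0 x y hMuv
      (Rtier_le_of_rank_lt hpref (Ne.symm huv) (M0_ne_self u) hu)
  · have hMvu : M0 v ≠ u := fun h => hMuv (by rw [← h, M0_M0])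
    exact tempts_of_Rtier_le_M0 x y hMvu (Rtier_le_of_rank_lt hpref huv (M0_ne_self v) hv)
end

section
/- In the instance R(x,y) with x, y disjoint, for every i the pair {a_i, c_i} cannot be blocked by any pair of the form {a_i, b_j}: if x_{ij} = 1 then b_j does not prefer a_i to d_j (since y_{ij} = 0), and if x_{ij} = 0 then a_i does not prefer b_j to c_i. -/
section Preferences

variable {n : ℕ} {x y : Fin n → Fin n → Bool} {rank : Fin 4 × Fin n → Fin 4 × Fin n → ℕ}

theorem IsRPref.rank_c_lt_rank_b_of_x_eq_false (hpref : IsRPref x y rank) {i j : Fin n}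
    (hx : x i j = false) :
    rank ((0 : Fin 4), i) ((2 : Fin 4), i) < rank ((0 : Fin 4), i) ((1 : Fin 4), j) :=
  hpref.1 _ _ _ (by simp) (by simp) (by simp [Rtier, hx])

theorem IsRPref.rank_d_lt_rank_a_of_y_eq_false (hpref : IsRPref x y rank) {i j : Fin n}
    (hy : y i j = false) :
    rank ((1 : Fin 4), j) ((3 : Fin 4), j) < rank ((1 : Fin 4), j) ((0 : Fin 4), i) :=
  hpref.1 _ _ _ (by simp) (by simp) (by simp [Rtier, hy])

end Preferences

@[simp]
theorem M0_apply_zero {n : ℕ} (i : Fin n) : M0 ((0 : Fin 4), i) = ((2 : Fin 4), i) := by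
  simp [M0]

@[simp]
theorem M0_apply_one {n : ℕ} (j : Fin n) : M0 ((1 : Fin 4), j) = ((3 : Fin 4), j) := by
  simp [M0]

/-- With `x, y` disjoint, no pair `{aᵢ, bⱼ}` blocks `M₀`: if `x i j = 1` then `bⱼ` does not
prefer `aᵢ` to `dⱼ`, and if `x i j = 0` then `aᵢ` does not prefer `bⱼ` to `cᵢ`. -/
theorem stmt6 {n : ℕ} (x y : Fin n → Fin n → Bool)
    (rank : Fin 4 × Fin n → Fin 4 × Fin n → ℕ) (hpref : IsRPref x y rank)
    (hdisj : ∀ i j, ¬ (x i j = true ∧ y i j = true)) (i j : Fin n) :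
    (x i j = true →
      ¬ rank ((1 : Fin 4), j) ((0 : Fin 4), i) < rank ((1 : Fin 4), j) ((3 : Fin 4), j)) ∧
    (x i j = false →
      ¬ rank ((0 : Fin 4), i) ((1 : Fin 4), j) < rank ((0 : Fin 4), i) ((2 : Fin 4), i)) ∧
    ¬ Blocks rank (M0 (n := n)) ((0 : Fin 4), i) ((1 : Fin 4), j) := by
  have hb : x i j = true →
      ¬ rank ((1 : Fin 4), j) ((0 : Fin 4), i) < rank ((1 : Fin 4), j) ((3 : Fin 4), j) :=
    fun hx => not_lt_of_gt <| hpref.rank_d_lt_rank_a_of_y_eq_false <|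
      Bool.eq_false_iff.mpr fun hy => hdisj i j ⟨hx, hy⟩
  have ha : x i j = false →
      ¬ rank ((0 : Fin 4), i) ((1 : Fin 4), j) < rank ((0 : Fin 4), i) ((2 : Fin 4), i) :=
    fun hx => not_lt_of_gt (hpref.rank_c_lt_rank_b_of_x_eq_false hx)
  refine ⟨hb, ha, ?_⟩
  rintro ⟨-, -, hprefa, hprefb⟩
  rw [M0_apply_zero] at hprefa
  rw [M0_apply_one] at hprefb
  cases hx : x i j
  · exact ha hx hprefa
  · exact hb hx hprefb
end

section
/- In the instance R(x,y) with x and y uniquely intersecting at (k,ℓ), no stable matching can contain the pair {b_ℓ, d_ℓ}: if {b_ℓ, d_ℓ} ∈ M then, considering a_k's partner in M, either {a_k, b_ℓ} blocks M, or a_k is matched above b_ℓ in its list which is impossible given the preference structure and stability constraints on other agents. -/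
/-! Suppose `M b_ℓ = d_ℓ`. Then `b_ℓ` prefers `a_k` (tier 1, as `y_{kℓ} = 1`) to its partner, so
stability forces `a_k` to be matched at least as well as `b_ℓ`, i.e. inside its top tier: to some
`b_j` with `x_{kj} = 1` and `j ≠ ℓ`. By unique intersection `y_{kj} = 0`, so `b_j` ranks its
partner `a_k` in its bottom tier, below `d_j`, while `d_j` ranks `b_j` first: `{b_j, d_j}` blocks. -/

section Matching

variable {S : Type*} {rank : S → S → ℕ} {M : S → S}

theorem IsMatching.apply_eq_comm (hM : IsMatching M) {u v : S} : M u = v ↔ M v = u :=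
  ⟨fun h => h ▸ hM.1 u, fun h => h ▸ hM.1 v⟩

theorem IsStable.rank_apply_le {u v : S} (hM : IsStable rank M) (huv : u ≠ v)
    (hv : rank v u < rank v (M v)) : rank u (M u) ≤ rank u v := by
  have hMu : M u ≠ v := fun h => (hM.1.apply_eq_comm.1 h ▸ hv).false
  by_contra! h
  exact hM.2 u v ⟨huv, hMu, h, hv⟩

end Matching

section RInstance

variable {n : ℕ} {x y : Fin n → Fin n → Bool} {rank : Fin 4 × Fin n → Fin 4 × Fin n → ℕ}
  {M : Fin 4 × Fin n → Fin 4 × Fin n}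

theorem IsRPref.rtier_le_of_rank_le (hpref : IsRPref x y rank) {u v w : Fin 4 × Fin n}
    (hv : v ≠ u) (hw : w ≠ u) (h : rank u v ≤ rank u w) : Rtier x y u v ≤ Rtier x y u w := by
  by_contra! hlt
  exact (hpref.1 u w v hw hv hlt).not_ge h

theorem IsStable.rtier_apply_le (hM : IsStable rank M) (hpref : IsRPref x y rank)
    {u v : Fin 4 × Fin n} (huv : u ≠ v) (hv : Rtier x y v u < Rtier x y v (M v)) :
    Rtier x y u (M u) ≤ Rtier x y u v :=
  hpref.rtier_le_of_rank_le (hM.1.2 u) huv.symm <|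
    hM.rank_apply_le huv (hpref.1 v u (M v) huv (hM.1.2 v) hv)

theorem rtier_a_eq_zero_iff (i : Fin n) (v : Fin 4 × Fin n) :
    Rtier x y (0, i) v = 0 ↔ v.1 = 1 ∧ x i v.2 = true := by
  unfold Rtier
  split_ifs <;> simp_all

theorem rtier_b_a (i j : Fin n) : Rtier x y (1, j) (0, i) = if y i j = true then 1 else 3 := by
  simp [Rtier]

theorem rtier_b_d (j : Fin n) : Rtier x y (1, j) (3, j) = 2 := by
  simp [Rtier]

theorem rtier_d_b (j : Fin n) : Rtier x y (3, j) (1, j) = 0 := by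
  simp [Rtier]

theorem rtier_d_pos_of_ne (j : Fin n) {v : Fin 4 × Fin n} (hv : v ≠ (1, j)) :
    0 < Rtier x y (3, j) v := by
  simp only [Rtier]
  rw [if_neg (by decide), if_neg (by decide), if_neg (by decide),
    if_neg fun h => hv (Prod.ext h.1 h.2)]
  exact one_pos

/-- Otherwise `{b_j, d_j}` blocks. -/
theorem IsStable.y_eq_true_of_b_matched_a (hM : IsStable rank M) (hpref : IsRPref x y rank)
    {i j : Fin n} (hba : M (1, j) = (0, i)) : y i j = true := by
  have hdb : M (3, j) ≠ (1, j) := fun h => by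
    simp [hM.1.apply_eq_comm.1 h] at hba
  have h := hM.rtier_apply_le hpref (u := (1, j)) (v := (3, j)) (by simp)
    (by rw [rtier_d_b]; exact rtier_d_pos_of_ne j hdb)
  rw [hba, rtier_b_a, rtier_b_d] at h
  by_contra hy
  simp [hy] at h

theorem IsStable.exists_a_matched_b_of_b_matched_d (hM : IsStable rank M)
    (hpref : IsRPref x y rank) {k l : Fin n} (hx : x k l = true) (hy : y k l = true)
    (hbd : M (1, l) = (3, l)) : ∃ j, j ≠ l ∧ x k j = true ∧ M (0, k) = (1, j) := by
  have hak : M (0, k) ≠ (1, l) := fun h => by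
    simp [hM.1.apply_eq_comm.1 h] at hbd
  have htop := hM.rtier_apply_le hpref (u := (0, k)) (v := (1, l)) (by simp)
    (by rw [hbd, rtier_b_a, rtier_b_d, if_pos hy]; exact one_lt_two)
  rw [(rtier_a_eq_zero_iff k (1, l)).2 ⟨rfl, hx⟩, Nat.le_zero, rtier_a_eq_zero_iff] at htop
  exact ⟨(M (0, k)).2, fun hj => hak (Prod.ext htop.1 hj), htop.2, Prod.ext htop.1 rfl⟩

end RInstance

/-- With `x, y` uniquely intersecting at `(k, l)`, no stable matching of `R(x,y)` contains the
pair `{b_l, d_l}`. -/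
theorem stmt11 {n : ℕ} (x y : Fin n → Fin n → Bool)
    (rank : Fin 4 × Fin n → Fin 4 × Fin n → ℕ) (hpref : IsRPref x y rank)
    (k l : Fin n) (hx : x k l = true) (hy : y k l = true)
    (huniq : ∀ i j, (i, j) ≠ (k, l) → ¬ (x i j = true ∧ y i j = true))
    (M : Fin 4 × Fin n → Fin 4 × Fin n) (hM : IsStable rank M) :
    M ((1 : Fin 4), l) ≠ ((3 : Fin 4), l) := by
  intro hbd
  obtain ⟨j, hjl, hxj, hakbj⟩ := hM.exists_a_matched_b_of_b_matched_d hpref hx hy hbd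
  have hyj := hM.y_eq_true_of_b_matched_a hpref (hM.1.apply_eq_comm.1 hakbj)
  exact huniq k j (by simp [hjl]) ⟨hxj, hyj⟩
end

section
/- In the instance R(x,y) with x and y uniquely intersecting at (k,ℓ), in any perfect matching M that contains all pairs {a_i, c_i} for i ≠ k and all pairs {b_j, d_j} for j ≠ ℓ, the remaining agents a_k, c_k, b_ℓ, d_ℓ must be matched among themselves, and each of the three possible matchings on {a_k, c_k, b_ℓ, d_ℓ} is blocked by some pair (so M is not stable). -/
/-
`M` is an involution preserving the agents outside `{a_k, c_k, b_ℓ, d_ℓ}`, so it preserves this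
four-element set as well and restricts to one of its three perfect matchings. Because
`x_{kℓ} = y_{kℓ} = 1`, each is blocked: `{a_k c_k, b_ℓ d_ℓ}` by `a_k b_ℓ`, `{a_k b_ℓ, c_k d_ℓ}`
by `c_k b_ℓ`, and `{a_k d_ℓ, c_k b_ℓ}` by `a_k c_k`.
-/

theorem Function.Involutive.mapsTo_of_mapsTo_compl {S : Type*} {f : S → S}
    (hf : Function.Involutive f) {T : Set S} (h : Set.MapsTo f Tᶜ Tᶜ) : Set.MapsTo f T T := by
  intro u hu
  by_contra hfu
  exact h hfu (by rwa [hf u])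

namespace IsMatching

variable {S : Type*} {M : S → S}

theorem apply_eq_comm_s16 (hM : IsMatching M) {u v : S} (h : M u = v) : M v = u := by
  rw [← h, hM.1 u]

theorem eq_or_eq_or_eq_of_mapsTo_four (hM : IsMatching M) {p q r s : S}
    (hpq : p ≠ q) (hpr : p ≠ r) (hqr : q ≠ r) (hrs : r ≠ s)
    (hmaps : Set.MapsTo M {p, q, r, s} {p, q, r, s}) :
    (M p = q ∧ M r = s) ∨ (M p = r ∧ M q = s) ∨ (M p = s ∧ M q = r) := by
  have hp := hmaps (by simp : p ∈ _)
  have hq := hmaps (by simp : q ∈ _)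
  have hr := hmaps (by simp : r ∈ _)
  simp only [Set.mem_insert_iff, Set.mem_singleton_iff] at hp hq hr
  have := hM.2 p; have := hM.2 q; have := hM.2 r
  have := hM.1 p; have := hM.1 q; have := hM.1 r
  grind

end IsMatching

section RInstance

variable {n : ℕ} {x y : Fin n → Fin n → Bool} {rank : Fin 4 × Fin n → Fin 4 × Fin n → ℕ}
  {M : Fin 4 × Fin n → Fin 4 × Fin n} {k l : Fin n}

theorem mapsTo_compl_of_pairs (hM : IsMatching M)
    (hAC : ∀ i : Fin n, i ≠ k → M ((0 : Fin 4), i) = ((2 : Fin 4), i))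
    (hBD : ∀ j : Fin n, j ≠ l → M ((1 : Fin 4), j) = ((3 : Fin 4), j)) :
    Set.MapsTo M ({((0 : Fin 4), k), ((2 : Fin 4), k), ((1 : Fin 4), l), ((3 : Fin 4), l)} :
      Set (Fin 4 × Fin n))ᶜ
      ({((0 : Fin 4), k), ((2 : Fin 4), k), ((1 : Fin 4), l), ((3 : Fin 4), l)} :
      Set (Fin 4 × Fin n))ᶜ := by
  rintro ⟨t, i⟩ hu
  obtain rfl | rfl | rfl | rfl : t = 0 ∨ t = 1 ∨ t = 2 ∨ t = 3 := by fin_cases t <;> simp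
  · have hi : i ≠ k := by simpa using hu
    simpa [hAC i hi] using hi
  · have hi : i ≠ l := by simpa using hu
    simpa [hBD i hi] using hi
  · have hi : i ≠ k := by simpa using hu
    simpa [hM.apply_eq_comm_s16 (hAC i hi)] using hi
  · have hi : i ≠ l := by simpa using hu
    simpa [hM.apply_eq_comm_s16 (hBD i hi)] using hi

theorem IsRPref.blocks_of_ac_bd (hpref : IsRPref x y rank) (hx : x k l = true)
    (hy : y k l = true) (hac : M ((0 : Fin 4), k) = ((2 : Fin 4), k))
    (hbd : M ((1 : Fin 4), l) = ((3 : Fin 4), l)) :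
    Blocks rank M ((0 : Fin 4), k) ((1 : Fin 4), l) := by
  refine ⟨by simp, by simp [hac], ?_, ?_⟩
  · rw [hac]; exact hpref.1 _ _ _ (by simp) (by simp) (by simp [Rtier, hx])
  · rw [hbd]; exact hpref.1 _ _ _ (by simp) (by simp) (by simp [Rtier, hy])

theorem IsRPref.blocks_of_ab_cd (hpref : IsRPref x y rank) (hy : y k l = true)
    (hba : M ((1 : Fin 4), l) = ((0 : Fin 4), k)) (hcd : M ((2 : Fin 4), k) = ((3 : Fin 4), l)) :
    Blocks rank M ((2 : Fin 4), k) ((1 : Fin 4), l) := by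
  refine ⟨by simp, by simp [hcd], ?_, ?_⟩
  · rw [hcd]; exact hpref.1 _ _ _ (by simp) (by simp) (by simp [Rtier])
  · rw [hba]; exact hpref.1 _ _ _ (by simp) (by simp) (by simp [Rtier, hy])

theorem IsRPref.blocks_of_ad_cb (hpref : IsRPref x y rank)
    (had : M ((0 : Fin 4), k) = ((3 : Fin 4), l)) (hcb : M ((2 : Fin 4), k) = ((1 : Fin 4), l)) :
    Blocks rank M ((0 : Fin 4), k) ((2 : Fin 4), k) := by
  refine ⟨by simp, by simp [had], ?_, ?_⟩
  · rw [had]; exact hpref.1 _ _ _ (by simp) (by simp) (by simp [Rtier])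
  · rw [hcb]; exact hpref.1 _ _ _ (by simp) (by simp) (by simp [Rtier])

end RInstance

theorem stmt16_general {n : ℕ} (x y : Fin n → Fin n → Bool)
    (rank : Fin 4 × Fin n → Fin 4 × Fin n → ℕ) (hpref : IsRPref x y rank)
    (k l : Fin n) (hx : x k l = true) (hy : y k l = true)
    (M : Fin 4 × Fin n → Fin 4 × Fin n) (hM : IsMatching M)
    (hAC : ∀ i : Fin n, i ≠ k → M ((0 : Fin 4), i) = ((2 : Fin 4), i))
    (hBD : ∀ j : Fin n, j ≠ l → M ((1 : Fin 4), j) = ((3 : Fin 4), j)) :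
    (∀ u ∈ ({((0 : Fin 4), k), ((2 : Fin 4), k), ((1 : Fin 4), l), ((3 : Fin 4), l)} :
        Set (Fin 4 × Fin n)),
      M u ∈ ({((0 : Fin 4), k), ((2 : Fin 4), k), ((1 : Fin 4), l), ((3 : Fin 4), l)} :
        Set (Fin 4 × Fin n))) ∧
    (∃ u v, Blocks rank M u v) ∧ ¬ IsStable rank M := by
  have hclosed :=
    Function.Involutive.mapsTo_of_mapsTo_compl hM.1 (mapsTo_compl_of_pairs hM hAC hBD)
  suffices hblock : ∃ u v, Blocks rank M u v from
    ⟨hclosed, hblock, fun hstable => hblock.elim fun u ⟨v, huv⟩ => hstable.2 u v huv⟩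
  rcases hM.eq_or_eq_or_eq_of_mapsTo_four (by simp) (by simp) (by simp) (by simp) hclosed with
    ⟨hac, hbd⟩ | ⟨hab, hcd⟩ | ⟨had, hcb⟩
  · exact ⟨_, _, hpref.blocks_of_ac_bd hx hy hac hbd⟩
  · exact ⟨_, _, hpref.blocks_of_ab_cd hy (hM.apply_eq_comm_s16 hab) hcd⟩
  · exact ⟨_, _, hpref.blocks_of_ad_cb had hcb⟩

/-- With `x, y` uniquely intersecting at `(k, l)`, any perfect matching containing all pairs
`{aᵢ, cᵢ}` for `i ≠ k` and `{bⱼ, dⱼ}` for `j ≠ l` matches `a_k, c_k, b_l, d_l` among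
themselves and has a blocking pair (hence is not stable). -/
theorem stmt16 {n : ℕ} (x y : Fin n → Fin n → Bool)
    (rank : Fin 4 × Fin n → Fin 4 × Fin n → ℕ) (hpref : IsRPref x y rank)
    (k l : Fin n) (hx : x k l = true) (hy : y k l = true)
    (huniq : ∀ i j, (i, j) ≠ (k, l) → ¬ (x i j = true ∧ y i j = true))
    (M : Fin 4 × Fin n → Fin 4 × Fin n) (hM : IsMatching M)
    (hAC : ∀ i : Fin n, i ≠ k → M ((0 : Fin 4), i) = ((2 : Fin 4), i))
    (hBD : ∀ j : Fin n, j ≠ l → M ((1 : Fin 4), j) = ((3 : Fin 4), j)) :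
    (∀ u ∈ ({((0 : Fin 4), k), ((2 : Fin 4), k), ((1 : Fin 4), l), ((3 : Fin 4), l)} :
        Set (Fin 4 × Fin n)),
      M u ∈ ({((0 : Fin 4), k), ((2 : Fin 4), k), ((1 : Fin 4), l), ((3 : Fin 4), l)} :
        Set (Fin 4 × Fin n))) ∧
    (∃ u v, Blocks rank M u v) ∧ ¬ IsStable rank M :=
  stmt16_general x y rank hpref k l hx hy M hM hAC hBD
end
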